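/- If m1 = m2 = m/k with k ≥ 2, then the unique pure Nash equilibrium (x1*, x2*) is given by x1* = x2* = (m / (4(1−p)k)) · (2k − (1+p) − √((2k − (1+p))² − 8(1−p))); moreover x1* + x2* ≤ (m1 + m2)/2, with equality if and only if m1 = m2 = m/2 (i.e., k = 2). -/

import Mathlib

/-- Average reward of pool 1 in the two-player miner's dilemma with betrayal,
where the total mining power is `m1 + m2 + t`. -/
noncomputable def r1 (m1 m2 t p x1 x2 : ℝ) : ℝ :=
  (m1*m2 + m1*x1 + p*m2*x2 - (1-p)*x1^2 - (1-p)*x1*x2) /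
    (((m1+m2+t) - (1-p)*(x1+x2)) * (m1*m2 + m1*x1 + m2*x2))

/-- Average reward of pool 2. -/
noncomputable def r2 (m1 m2 t p x1 x2 : ℝ) : ℝ :=
  (m1*m2 + m2*x2 + p*m1*x1 - (1-p)*x2^2 - (1-p)*x1*x2) /
    (((m1+m2+t) - (1-p)*(x1+x2)) * (m1*m2 + m1*x1 + m2*x2))

/-- `(x1, x2)` is a pure Nash equilibrium of the two-player miner's dilemma game. -/
noncomputable def IsNash (m1 m2 t p x1 x2 : ℝ) : Prop :=
  x1 ∈ Set.Icc 0 m1 ∧ x2 ∈ Set.Icc 0 m2 ∧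
  (∀ x ∈ Set.Icc (0:ℝ) m1, r1 m1 m2 t p x x2 ≤ r1 m1 m2 t p x1 x2) ∧
  (∀ x ∈ Set.Icc (0:ℝ) m2, r2 m1 m2 t p x1 x ≤ r2 m1 m2 t p x1 x2)


/-!
Write `μ = m1 = m2`, so `m = kμ` and `r1 = N / D` with `N` and `D` quadratic in the
deviating pool's infiltration `x`. For any `u`, `N(u) D(x) - N(x) D(u)` is a quadratic in `x`
vanishing at `u`, whose slope there is the derivative numerator `G = N' D - N D'`; so at an
equilibrium `G` satisfies the first-order (KKT) conditions on `[0, μ]`. The sign of `G` excludes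
both endpoints, and on the interior `G(y₁, y₂) - G(y₂, y₁)` is `y₁ - y₂` times a negative
factor, so `y₁ = y₂ = y` with `q(y) = 2(1-p)y² - (2k-1-p)μy + μ² = 0`; only the smaller root of
`q` lies below `μ`.
Conversely, at the smaller root `x*` the difference `N(x*) D(x) - N(x) D(x*)` is a nonnegative
multiple of `(x - x*)²`, so `x*` is a best response to itself.
Finally `2x* ≤ μ` amounts to `2k - 3 + p ≤ √disc`, and `disc - (2k-3+p)² = 8(1-p)(k-2)`.
-/

open Filter Topology Set

lemma nonneg_of_forall_add_mul_nonneg {L a δ : ℝ} (hδ : 0 < δ)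
    (h : ∀ ε, 0 < ε → ε ≤ δ → 0 ≤ L + a * ε) : 0 ≤ L := by
  have hlim : Tendsto (fun ε => L + a * ε) (𝓝[>] 0) (𝓝 L) := by
    have : Tendsto (fun ε => L + a * ε) (𝓝 0) (𝓝 (L + a * 0)) :=
      (continuous_const.add (continuous_const.mul continuous_id)).tendsto 0
    simpa using this.mono_left nhdsWithin_le_nhds
  refine ge_of_tendsto hlim ?_
  filter_upwards [Ioc_mem_nhdsGT hδ] with ε hε using h ε hε.1 hε.2

namespace MinersDilemma

noncomputable section

def rewardNum (μ p x v : ℝ) : ℝ := μ*μ + μ*x + p*μ*v - (1-p)*x^2 - (1-p)*x*v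

def rewardDen (μ k p x v : ℝ) : ℝ := (k*μ - (1-p)*(x+v)) * (μ*μ + μ*x + μ*v)

/-- `N' D - N D'`, the numerator of `∂/∂u (rewardNum / rewardDen)`. -/
def rewardDerivNum (μ k p u v : ℝ) : ℝ :=
  (μ - 2*(1-p)*u - (1-p)*v) * rewardDen μ k p u v
    - rewardNum μ p u v * (μ^2*(k-(1-p)) - 2*(1-p)*μ*(u+v))

/-- First-order conditions for `u` to maximise `rewardNum / rewardDen` over `[0, μ]`. -/
def IsKKT (μ k p u v : ℝ) : Prop :=
  (0 < u → 0 ≤ rewardDerivNum μ k p u v) ∧ (u < μ → rewardDerivNum μ k p u v ≤ 0)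

def nashQuad (μ k p y : ℝ) : ℝ := 2*(1-p)*y^2 - (2*k-1-p)*μ*y + μ^2

def nashDisc (k p : ℝ) : ℝ := (2*k - (1+p))^2 - 8*(1-p)

/-- The smaller root of `nashQuad`. -/
def nashPoint (μ k p : ℝ) : ℝ := μ/(4*(1-p)) * (2*k - (1+p) - √(nashDisc k p))

end

variable {μ t k p : ℝ}

lemma r1_eq_div (hmt : μ + μ + t = k*μ) (x v : ℝ) :
    r1 μ μ t p x v = rewardNum μ p x v / rewardDen μ k p x v := by
  unfold r1 rewardNum rewardDen
  rw [hmt]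

lemma r2_eq_r1_swap (x v : ℝ) : r2 μ μ t p x v = r1 μ μ t p v x := by
  unfold r1 r2
  congr 1 <;> ring

lemma rewardDen_pos (hμ : 0 < μ) {x v : ℝ} (hx : 0 ≤ x) (hv : 0 ≤ v)
    (h : (1-p)*(x+v) < k*μ) : 0 < rewardDen μ k p x v :=
  mul_pos (by linarith) (by positivity)

lemma cross_sub_eq (u x v : ℝ) :
    rewardNum μ p u v * rewardDen μ k p x v - rewardNum μ p x v * rewardDen μ k p u v
      = (u - x) * (rewardDerivNum μ k p u v
          + (1-p)*(rewardDen μ k p u v - μ*rewardNum μ p u v) * (u - x)) := by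
  unfold rewardDerivNum rewardNum rewardDen
  ring

lemma rewardDerivNum_nonneg_of_forall_lt {u v : ℝ} (hu : 0 < u)
    (h : ∀ x, 0 ≤ x → x < u →
      rewardNum μ p x v * rewardDen μ k p u v ≤ rewardNum μ p u v * rewardDen μ k p x v) :
    0 ≤ rewardDerivNum μ k p u v := by
  refine nonneg_of_forall_add_mul_nonneg
    (a := (1-p)*(rewardDen μ k p u v - μ*rewardNum μ p u v)) hu fun ε hε hεu => ?_
  have hx := sub_nonneg.2 (h (u - ε) (by linarith) (by linarith))
  rw [cross_sub_eq, sub_sub_cancel] at hx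
  exact nonneg_of_mul_nonneg_right hx hε

lemma rewardDerivNum_nonpos_of_forall_gt {u v w : ℝ} (huw : u < w)
    (h : ∀ x, u < x → x ≤ w →
      rewardNum μ p x v * rewardDen μ k p u v ≤ rewardNum μ p u v * rewardDen μ k p x v) :
    rewardDerivNum μ k p u v ≤ 0 := by
  set c := (1-p)*(rewardDen μ k p u v - μ*rewardNum μ p u v)
  suffices 0 ≤ -rewardDerivNum μ k p u v by linarith
  refine nonneg_of_forall_add_mul_nonneg (a := c) (sub_pos.2 huw) fun ε hε hεw => ?_
  have hx := sub_nonneg.2 (h (u + ε) (by linarith) (by linarith))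
  rw [cross_sub_eq] at hx
  have hx' : 0 ≤ ε * (-rewardDerivNum μ k p u v + c * ε) := by linarith
  exact nonneg_of_mul_nonneg_right hx' hε

lemma isKKT_of_isBestResponse (hμ : 0 < μ) (hk : 2 ≤ k) (hp0 : 0 ≤ p)
    (hmt : μ + μ + t = k*μ) {u v : ℝ} (hu : u ∈ Icc 0 μ) (hv : v ∈ Icc 0 μ)
    (hD : (1-p)*(u+v) < k*μ) (hr : ∀ x ∈ Icc 0 μ, r1 μ μ t p x v ≤ r1 μ μ t p u v) :
    IsKKT μ k p u v := by
  obtain ⟨hu0, huμ⟩ := hu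
  obtain ⟨hv0, hvμ⟩ := hv
  have hcross : ∀ x, 0 ≤ x → x < μ →
      rewardNum μ p x v * rewardDen μ k p u v ≤ rewardNum μ p u v * rewardDen μ k p x v := by
    intro x hx0 hxμ
    have hDx : 0 < rewardDen μ k p x v :=
      rewardDen_pos hμ hx0 hv0 (by nlinarith [mul_nonneg hp0 (add_nonneg hx0 hv0)])
    have := hr x ⟨hx0, hxμ.le⟩
    rwa [r1_eq_div hmt, r1_eq_div hmt, div_le_div_iff₀ hDx (rewardDen_pos hμ hu0 hv0 hD)] at this
  refine ⟨fun hpos => ?_, fun hlt => ?_⟩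
  · exact rewardDerivNum_nonneg_of_forall_lt hpos fun x hx0 hxu => hcross x hx0 (by linarith)
  · exact rewardDerivNum_nonpos_of_forall_gt (w := (u+μ)/2) (by linarith)
      fun x hux hxw => hcross x (by linarith) (by linarith)

lemma rewardDerivNum_right_endpoint_neg (hμ : 0 < μ) (hk : 2 ≤ k) (hp0 : 0 ≤ p) (hp1 : p < 1)
    {z : ℝ} (hz0 : 0 ≤ z) (hzμ : z ≤ μ) (hD : (1-p)*(μ+z) < k*μ) :
    rewardDerivNum μ k p μ z < 0 := by
  have hq : 0 < 1 - p := by linarith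
  have hid : rewardDerivNum μ k p μ z = -(μ*(1-p)) *
      (μ^2*(k*μ - (1-p)*(μ+z)) + z^2*(k*μ - (1-p)*(μ+z)) + (μ-z)*z*μ
        + 2*(k-2)*μ^2*z - p*μ^2*z + 2*(k-2)*μ^3) := by
    unfold rewardDerivNum rewardNum rewardDen; ring
  rw [hid, neg_mul, neg_lt_zero]
  refine mul_pos (by positivity) ?_
  have hDpos : 0 < k*μ - (1-p)*(μ+z) := by linarith
  have hpz : 2*p*z ≤ k*μ - (1-p)*(μ+z) := by nlinarith
  nlinarith [mul_pos (pow_pos hμ 2) hDpos, mul_le_mul_of_nonneg_left hpz (sq_nonneg μ),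
    mul_nonneg (sq_nonneg z) hDpos.le, mul_nonneg (mul_nonneg (sub_nonneg.2 hzμ) hz0) hμ.le,
    mul_nonneg (mul_nonneg (sub_nonneg.2 hk) (sq_nonneg μ)) hz0,
    mul_nonneg (sub_nonneg.2 hk) (pow_pos hμ 3).le]

lemma rewardDerivNum_zero_zero_pos (hμ : 0 < μ) (hp1 : p < 1) :
    0 < rewardDerivNum μ k p 0 0 := by
  have hid : rewardDerivNum μ k p 0 0 = μ*(1-p)*μ^3 := by
    unfold rewardDerivNum rewardNum rewardDen; ring
  have : 0 < 1 - p := by linarith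
  rw [hid]
  positivity

lemma rewardDerivNum_zero_left_pos (hμ : 0 < μ) (hk : 2 ≤ k) (hp0 : 0 ≤ p) (hp1 : p < 1)
    {z : ℝ} (hz0 : 0 < z) (hG : rewardDerivNum μ k p z 0 = 0) : 0 < rewardDerivNum μ k p 0 z := by
  have hq : 0 < 1 - p := by linarith
  have hid : rewardDerivNum μ k p z 0 = μ^2*(1-p) * ((1+(1-p)-k)*z^2 + 2*(1-k)*μ*z + μ^2) := by
    unfold rewardDerivNum rewardNum rewardDen; ring
  have hquad : (1+(1-p)-k)*z^2 + 2*(1-k)*μ*z + μ^2 = 0 := by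
    rw [hid] at hG
    exact (mul_eq_zero.mp hG).resolve_left (by positivity)
  have hid2 : rewardDerivNum μ k p 0 z
      = μ*(1-p) * ((1-p)*z^3 + (1-(1-p)-k)*μ*z^2 + (2-(1-p))*μ^2*z + μ^3) := by
    unfold rewardDerivNum rewardNum rewardDen; ring
  rw [hid2]
  refine mul_pos (by positivity) ?_
  nlinarith [mul_nonneg hq.le (mul_nonneg hz0.le (sq_nonneg (z - μ))),
    mul_pos (mul_pos hμ hμ) hz0, hk, hp0]

lemma eq_of_rewardDerivNum_eq_zero (hμ : 0 < μ) (hk : 2 ≤ k) (hp0 : 0 ≤ p) (hp1 : p < 1)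
    {y₁ y₂ : ℝ} (hG₁ : rewardDerivNum μ k p y₁ y₂ = 0) (hG₂ : rewardDerivNum μ k p y₂ y₁ = 0) :
    y₁ = y₂ := by
  have hq : 0 < 1 - p := by linarith
  have hid : rewardDerivNum μ k p y₁ y₂ - rewardDerivNum μ k p y₂ y₁
      = (y₁ - y₂) * (μ*(1-p) * (-(1-p)*(y₁+y₂-μ)^2 + 2*μ^2*((1-p) - k))) := by
    unfold rewardDerivNum rewardNum rewardDen; ring
  have hneg : μ*(1-p) * (-(1-p)*(y₁+y₂-μ)^2 + 2*μ^2*((1-p) - k)) < 0 :=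
    mul_neg_of_pos_of_neg (by positivity)
      (by nlinarith [mul_nonneg hq.le (sq_nonneg (y₁+y₂-μ)), mul_pos hμ hμ, hk, hp0])
  rw [hG₁, hG₂, sub_zero, eq_comm, mul_eq_zero] at hid
  exact sub_eq_zero.1 (hid.resolve_right hneg.ne)

lemma rewardDerivNum_self (y : ℝ) :
    rewardDerivNum μ k p y y = μ*(1-p)*(2*y+μ) * nashQuad μ k p y := by
  unfold rewardDerivNum rewardNum rewardDen nashQuad; ring

lemma eq_of_nashQuad_eq_zero (hk : 2 ≤ k) (hp0 : 0 ≤ p) (hp1 : p < 1) {y y' : ℝ}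
    (hy : y < μ) (hy' : y' < μ)
    (hQ : nashQuad μ k p y = 0) (hQ' : nashQuad μ k p y' = 0) : y = y' := by
  unfold nashQuad at hQ hQ'
  have hq : 0 < 1 - p := by linarith
  by_contra hne
  have hsum : 2*(1-p)*(y+y') = (2*k-1-p)*μ := by
    have hfac : (y - y') * (2*(1-p)*(y+y') - (2*k-1-p)*μ) = 0 := by
      linear_combination hQ - hQ'
    linarith [(mul_eq_zero.mp hfac).resolve_left (sub_ne_zero.2 hne)]
  have hprod : μ^2 = 2*(1-p)*y*y' := by linear_combination hQ + (-y) * hsum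
  nlinarith [mul_pos (mul_pos hq (sub_pos.2 hy)) (sub_pos.2 hy'), hk, hp0]

namespace IsKKT

variable {u v : ℝ}

lemma rewardDerivNum_eq_zero (hK : IsKKT μ k p u v) (hu0 : 0 < u) (huμ : u < μ) :
    rewardDerivNum μ k p u v = 0 :=
  le_antisymm (hK.2 huμ) (hK.1 hu0)

lemma lt_right (hK : IsKKT μ k p u v) (hμ : 0 < μ) (hk : 2 ≤ k) (hp0 : 0 ≤ p) (hp1 : p < 1)
    (hu : u ≤ μ) (hv0 : 0 ≤ v) (hvμ : v ≤ μ) (hD : (1-p)*(u+v) < k*μ) : u < μ := by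
  rcases hu.lt_or_eq with hu | rfl
  · exact hu
  · exact absurd (hK.1 hμ) (rewardDerivNum_right_endpoint_neg hμ hk hp0 hp1 hv0 hvμ hD).not_ge

lemma pos (hK : IsKKT μ k p u v) (hK' : IsKKT μ k p v u) (hμ : 0 < μ) (hk : 2 ≤ k)
    (hp0 : 0 ≤ p) (hp1 : p < 1) (hu0 : 0 ≤ u) (huμ : u < μ) (hv0 : 0 ≤ v) (hvμ : v < μ) :
    0 < u := by
  rcases hu0.lt_or_eq with hu | rfl
  · exact hu
  have hG : rewardDerivNum μ k p 0 v ≤ 0 := hK.2 huμ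
  rcases hv0.lt_or_eq with hv | rfl
  · exact absurd hG (rewardDerivNum_zero_left_pos hμ hk hp0 hp1 hv
      (hK'.rewardDerivNum_eq_zero hv hvμ)).not_ge
  · exact absurd hG (rewardDerivNum_zero_zero_pos hμ hp1).not_ge

end IsKKT

lemma nashDisc_sub_sq (k p : ℝ) : nashDisc k p - (2*k-3+p)^2 = 8*(1-p)*(k-2) := by
  unfold nashDisc; ring

lemma le_sqrt_nashDisc (hk : 2 ≤ k) (hp1 : p < 1) : 2*k-3+p ≤ √(nashDisc k p) :=
  Real.le_sqrt_of_sq_le (by nlinarith [nashDisc_sub_sq k p])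

lemma sqrt_nashDisc_lt (hk : 2 ≤ k) (hp1 : p < 1) : √(nashDisc k p) < 2*k - (1+p) :=
  (Real.sqrt_lt' (by linarith)).2 (by unfold nashDisc; linarith)

lemma sqrt_nashDisc_eq_iff (hk : 2 ≤ k) (hp0 : 0 ≤ p) (hp1 : p < 1) :
    √(nashDisc k p) = 2*k-3+p ↔ k = 2 := by
  rw [Real.sqrt_eq_iff_eq_sq (by nlinarith [nashDisc_sub_sq k p]) (by linarith),
    ← sub_eq_zero, nashDisc_sub_sq, mul_eq_zero, sub_eq_zero]
  have : 8*(1-p) ≠ 0 := by linarith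
  simp [this]

lemma two_mul_nashPoint_sub (hp1 : p < 1) (μ : ℝ) :
    2 * nashPoint μ k p - μ = μ * (2*k-3+p - √(nashDisc k p)) / (2*(1-p)) := by
  have : 1 - p ≠ 0 := by linarith
  unfold nashPoint
  field_simp
  ring

lemma nashPoint_pos (hμ : 0 < μ) (hk : 2 ≤ k) (hp1 : p < 1) : 0 < nashPoint μ k p :=
  mul_pos (div_pos hμ (by linarith)) (sub_pos.2 (sqrt_nashDisc_lt hk hp1))

lemma two_mul_nashPoint_le (hμ : 0 < μ) (hk : 2 ≤ k) (hp1 : p < 1) :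
    2 * nashPoint μ k p ≤ μ := by
  have := two_mul_nashPoint_sub (k := k) hp1 μ
  have : μ * (2*k-3+p - √(nashDisc k p)) / (2*(1-p)) ≤ 0 :=
    div_nonpos_of_nonpos_of_nonneg
      (mul_nonpos_of_nonneg_of_nonpos hμ.le (sub_nonpos.2 (le_sqrt_nashDisc hk hp1)))
      (by linarith)
  linarith

lemma two_mul_nashPoint_eq_iff (hμ : 0 < μ) (hk : 2 ≤ k) (hp0 : 0 ≤ p) (hp1 : p < 1) :
    2 * nashPoint μ k p = μ ↔ k = 2 := by
  rw [← sub_eq_zero, two_mul_nashPoint_sub hp1, div_eq_zero_iff, mul_eq_zero, sub_eq_zero,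
    eq_comm (a := 2*k-3+p), sqrt_nashDisc_eq_iff hk hp0 hp1]
  have : 2*(1-p) ≠ 0 := by linarith
  simp [hμ.ne', this]

lemma nashQuad_nashPoint (hk : 2 ≤ k) (hp1 : p < 1) (μ : ℝ) :
    nashQuad μ k p (nashPoint μ k p) = 0 := by
  have hs : √(nashDisc k p)^2 = nashDisc k p :=
    Real.sq_sqrt (by nlinarith [nashDisc_sub_sq k p])
  have : 1 - p ≠ 0 := by linarith
  unfold nashQuad nashPoint
  generalize √(nashDisc k p) = s at hs ⊢
  unfold nashDisc at hs
  field_simp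
  linear_combination (2*μ^2) * hs

lemma cross_sub_self_eq (x y : ℝ) :
    rewardNum μ p y y * rewardDen μ k p x y - rewardNum μ p x y * rewardDen μ k p y y
      = (1-p)*μ^2*(k*μ - 2*(1-p)*y)*(x-y)^2 + μ*(1-p)*(y-x)*(y+x+μ) * nashQuad μ k p y := by
  unfold rewardNum rewardDen nashQuad; ring

lemma r1_le_r1_nashPoint (hμ : 0 < μ) (hk : 2 ≤ k) (hp0 : 0 ≤ p) (hp1 : p < 1)
    (hmt : μ + μ + t = k*μ) {x : ℝ} (hx : x ∈ Icc 0 μ) :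
    r1 μ μ t p x (nashPoint μ k p) ≤ r1 μ μ t p (nashPoint μ k p) (nashPoint μ k p) := by
  have hxs0 := (nashPoint_pos hμ hk hp1).le
  have hxs := two_mul_nashPoint_le hμ hk hp1
  have hq : 0 < 1 - p := by linarith
  rw [r1_eq_div hmt, r1_eq_div hmt,
    div_le_div_iff₀ (rewardDen_pos hμ hx.1 hxs0 (by nlinarith [hx.2]))
      (rewardDen_pos hμ hxs0 hxs0 (by nlinarith)),
    ← sub_nonneg, cross_sub_self_eq, nashQuad_nashPoint hk hp1, mul_zero, add_zero]
  have : 0 ≤ k*μ - 2*(1-p)*nashPoint μ k p := by nlinarith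
  exact mul_nonneg (mul_nonneg (mul_nonneg hq.le (sq_nonneg μ)) this) (sq_nonneg _)

theorem isNash_nashPoint (hμ : 0 < μ) (hk : 2 ≤ k) (hp0 : 0 ≤ p) (hp1 : p < 1)
    (hmt : μ + μ + t = k*μ) : IsNash μ μ t p (nashPoint μ k p) (nashPoint μ k p) := by
  have hxs : nashPoint μ k p ∈ Icc 0 μ :=
    ⟨(nashPoint_pos hμ hk hp1).le, by linarith [two_mul_nashPoint_le hμ hk hp1]⟩
  refine ⟨hxs, hxs, fun x hx => r1_le_r1_nashPoint hμ hk hp0 hp1 hmt hx, fun x hx => ?_⟩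
  rw [r2_eq_r1_swap, r2_eq_r1_swap]
  exact r1_le_r1_nashPoint hμ hk hp0 hp1 hmt hx

/-- The only profile with a vanishing denominator is `k = 2, p = 0, y₁ = y₂ = μ`; there `r1` is
`0` by the convention `x / 0 = 0`, so pool 1 gains by deviating to `0`. -/
lemma lt_of_isNash (hμ : 0 < μ) (hk : 2 ≤ k) (hp0 : 0 ≤ p) (hmt : μ + μ + t = k*μ)
    {y₁ y₂ : ℝ} (hN : IsNash μ μ t p y₁ y₂) : (1-p)*(y₁+y₂) < k*μ := by
  obtain ⟨⟨hy₁0, hy₁μ⟩, ⟨hy₂0, hy₂μ⟩, hr₁, -⟩ := hN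
  by_contra! hD
  have hsum : k*μ ≤ y₁ + y₂ := by nlinarith [mul_nonneg hp0 (add_nonneg hy₁0 hy₂0)]
  have hy₁ : y₁ = μ := by nlinarith
  have hy₂ : y₂ = μ := by nlinarith
  obtain rfl : k = 2 := by nlinarith
  obtain rfl : p = 0 := by nlinarith
  have hdev := hr₁ 0 ⟨le_rfl, hμ.le⟩
  have hD0 : rewardDen μ 2 0 μ μ = 0 := by unfold rewardDen; ring
  rw [r1_eq_div hmt, r1_eq_div hmt, hy₁, hy₂, hD0, div_zero] at hdev
  have : 0 < rewardNum μ 0 0 μ / rewardDen μ 2 0 0 μ :=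
    div_pos (by unfold rewardNum; nlinarith) (rewardDen_pos hμ le_rfl hμ.le (by linarith))
  linarith

theorem eq_nashPoint_of_isNash (hμ : 0 < μ) (hk : 2 ≤ k) (hp0 : 0 ≤ p) (hp1 : p < 1)
    (hmt : μ + μ + t = k*μ) {y₁ y₂ : ℝ} (hN : IsNash μ μ t p y₁ y₂) :
    y₁ = nashPoint μ k p ∧ y₂ = nashPoint μ k p := by
  have hD := lt_of_isNash hμ hk hp0 hmt hN
  have hD' : (1-p)*(y₂+y₁) < k*μ := by linarith
  obtain ⟨hy₁, hy₂, hr₁, hr₂⟩ := hN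
  have hK₁ := isKKT_of_isBestResponse hμ hk hp0 hmt hy₁ hy₂ hD hr₁
  have hK₂ := isKKT_of_isBestResponse hμ hk hp0 hmt hy₂ hy₁ hD' fun x hx => by
    simpa only [r2_eq_r1_swap] using hr₂ x hx
  have hlt₁ := hK₁.lt_right hμ hk hp0 hp1 hy₁.2 hy₂.1 hy₂.2 hD
  have hlt₂ := hK₂.lt_right hμ hk hp0 hp1 hy₂.2 hy₁.1 hy₁.2 hD'
  have hpos₁ := hK₁.pos hK₂ hμ hk hp0 hp1 hy₁.1 hlt₁ hy₂.1 hlt₂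
  have hpos₂ := hK₂.pos hK₁ hμ hk hp0 hp1 hy₂.1 hlt₂ hy₁.1 hlt₁
  have hG₁ := hK₁.rewardDerivNum_eq_zero hpos₁ hlt₁
  have hG₂ := hK₂.rewardDerivNum_eq_zero hpos₂ hlt₂
  obtain rfl := eq_of_rewardDerivNum_eq_zero hμ hk hp0 hp1 hG₁ hG₂
  have hQ : nashQuad μ k p y₁ = 0 := by
    rw [rewardDerivNum_self] at hG₁
    have hq : 0 < 1 - p := by linarith
    have hy₁0 := hy₁.1
    exact (mul_eq_zero.mp hG₁).resolve_left (by positivity)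
  have := eq_of_nashQuad_eq_zero hk hp0 hp1 hlt₁
    (by linarith [two_mul_nashPoint_le hμ hk hp1, nashPoint_pos hμ hk hp1]) hQ
    (nashQuad_nashPoint hk hp1 μ)
  exact ⟨this, this⟩

end MinersDilemma

open MinersDilemma

theorem stmt9 (m1 m2 t p k : ℝ) (hm1 : 0 < m1) (hp0 : 0 ≤ p) (hp1 : p < 1) (hk : 2 ≤ k)
    (h1 : m1 = (m1+m2+t)/k) (h2 : m2 = (m1+m2+t)/k) :
    let m := m1 + m2 + t
    let xs : ℝ := m/(4*(1-p)*k) *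
      (2*k - (1+p) - Real.sqrt ((2*k - (1+p))^2 - 8*(1-p)))
    IsNash m1 m2 t p xs xs ∧
    (∀ y1 y2 : ℝ, IsNash m1 m2 t p y1 y2 → y1 = xs ∧ y2 = xs) ∧
    xs + xs ≤ (m1 + m2)/2 ∧
    (xs + xs = (m1 + m2)/2 ↔ k = 2) := by
  obtain rfl : m1 = m2 := h1.trans h2.symm
  have hmt : m1 + m1 + t = k * m1 := by
    rw [eq_div_iff (by linarith)] at h1
    linarith
  intro m xs
  have hxs : xs = nashPoint m1 k p := by
    have : m/(4*(1-p)*k) = m1/(4*(1-p)) := by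
      rw [show m = k * m1 from hmt]
      field_simp [show k ≠ 0 by linarith]
    rw [nashPoint, nashDisc, ← this]
  rw [hxs]
  refine ⟨isNash_nashPoint hm1 hk hp0 hp1 hmt,
    fun y1 y2 hN => eq_nashPoint_of_isNash hm1 hk hp0 hp1 hmt hN, ?_, ?_⟩
  · linarith [two_mul_nashPoint_le hm1 hk hp1]
  · rw [← two_mul_nashPoint_eq_iff hm1 hk hp0 hp1]
    constructor <;> intro h <;> linarith
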